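/- arXiv:1503.00484 — 6 statements merged into one kernel-verified Lean document; each statement's English description precedes it below -/
import Mathlib

section
/- Let A and B be nonempty finite types and f : A × B → ℝ. Suppose that for every probability mass function β : B → ℝ (β(b) ≥ 0, ∑_b β(b) = 1) there exists a ∈ A with ∑_b β(b) · f(a,b) ≤ 0. Then there exists a probability mass function α : A → ℝ (α(a) ≥ 0, ∑_a α(a) = 1) such that for every b ∈ B, ∑_a α(a) · f(a,b) ≤ 0. -/
/-!
If no mixed strategy `α` made every column payoff nonpositive, the compact convex set of
mixed payoff vectors `α ᵥ* M`, where `M a b = f (a, b)`, would miss the closed convex cone of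
nonpositive vectors. Hahn–Banach separates the two by a linear functional; being bounded above
on a cone, it has nonnegative coefficients, so after normalisation it is a mixed strategy `β`
with `0 < β ⬝ᵥ M a` for every pure strategy `a`, contradicting the hypothesis.
-/

open Matrix

theorem AddMonoidHom.map_nonpos_of_forall_nsmul_lt {E : Type*} [AddCommMonoid E] (ℓ : E →+ ℝ)
    {x : E} {u : ℝ} (h : ∀ n : ℕ, ℓ (n • x) < u) : ℓ x ≤ 0 := by
  by_contra! hpos
  obtain ⟨n, hn⟩ := exists_lt_nsmul hpos u
  exact (h n).not_gt (by rwa [map_nsmul])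

theorem Module.Dual.apply_eq_dotProduct {R ι : Type*} [CommSemiring R] [Fintype ι]
    [DecidableEq ι] (ℓ : Module.Dual R (ι → R)) (x : ι → R) :
    ℓ x = (fun i ↦ ℓ (Pi.single i 1)) ⬝ᵥ x :=
  (LinearMap.congr_fun ((dotProductEquiv R ι).apply_symm_apply ℓ) x).symm

theorem exists_nonneg_forall_dotProduct_pos {ι : Type*} [Fintype ι] {s : Set (ι → ℝ)}
    (hconv : Convex ℝ s) (hcomp : IsCompact s) (hs : ∀ x ∈ s, ¬x ≤ 0) :
    ∃ w : ι → ℝ, 0 ≤ w ∧ ∀ x ∈ s, 0 < w ⬝ᵥ x := by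
  classical
  obtain ⟨ℓ, u, v, hℓu, huv, hvℓ⟩ := geometric_hahn_banach_closed_compact (convex_Iic 0)
    isClosed_Iic hconv hcomp (Set.disjoint_right.2 hs)
  have hℓ_nonpos {x : ι → ℝ} (hx : x ≤ 0) : ℓ x ≤ 0 :=
    (ℓ : (ι → ℝ) →+ ℝ).map_nonpos_of_forall_nsmul_lt fun n ↦ hℓu _ (nsmul_nonpos hx n)
  have hv : 0 < v := by simpa using (hℓu 0 Set.self_mem_Iic).trans huv
  refine ⟨fun i ↦ ℓ (Pi.single i 1), fun i ↦ ?_, fun x hx ↦ ?_⟩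
  · simpa using hℓ_nonpos (x := -Pi.single i 1) (by simp [Pi.single_nonneg])
  · calc 0 < v := hv
      _ < ℓ x := hvℓ x hx
      _ = _ := Module.Dual.apply_eq_dotProduct (ℓ : Module.Dual ℝ (ι → ℝ)) x

theorem exists_mem_stdSimplex_forall_dotProduct_pos {ι : Type*} [Fintype ι] {s : Set (ι → ℝ)}
    (hne : s.Nonempty) (hconv : Convex ℝ s) (hcomp : IsCompact s) (hs : ∀ x ∈ s, ¬x ≤ 0) :
    ∃ β ∈ stdSimplex ℝ ι, ∀ x ∈ s, 0 < β ⬝ᵥ x := by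
  obtain ⟨w, hw, hpos⟩ := exists_nonneg_forall_dotProduct_pos hconv hcomp hs
  obtain ⟨x₀, hx₀⟩ := hne
  have hS : 0 < ∑ i, w i := by
    refine (Finset.sum_nonneg fun i _ ↦ hw i).lt_of_ne fun hS ↦ ?_
    have := hpos x₀ hx₀
    rw [(Fintype.sum_eq_zero_iff_of_nonneg hw).1 hS.symm, zero_dotProduct] at this
    exact this.false
  refine ⟨(∑ i, w i)⁻¹ • w, ⟨fun i ↦ ?_, ?_⟩, fun x hx ↦ ?_⟩
  · exact mul_nonneg (inv_nonneg.2 hS.le) (hw i)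
  · simp [← Finset.mul_sum, hS.ne']
  · rw [smul_dotProduct, smul_eq_mul]
    exact mul_pos (inv_pos.2 hS) (hpos x hx)

theorem stmt_3_general {A B : Type*} [Fintype A] [Fintype B] [Nonempty A]
    (f : A × B → ℝ)
    (h : ∀ β : B → ℝ, (∀ b, 0 ≤ β b) → (∑ b : B, β b = 1) →
      ∃ a : A, ∑ b : B, β b * f (a, b) ≤ 0) :
    ∃ α : A → ℝ, (∀ a, 0 ≤ α a) ∧ (∑ a : A, α a = 1) ∧
      ∀ b : B, ∑ a : A, α a * f (a, b) ≤ 0 := by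
  classical
  by_contra! hcon
  set M : Matrix A B ℝ := Matrix.of fun a b ↦ f (a, b)
  set s := vecMulLinear M '' stdSimplex ℝ A
  have hrow (a : A) : M a ∈ s :=
    ⟨Pi.single a 1, single_mem_stdSimplex ℝ a, single_one_vecMul a M⟩
  have hmixed : ∀ x ∈ s, ¬x ≤ 0 := by
    rintro _ ⟨α, hα, rfl⟩ hle
    obtain ⟨b, hb⟩ := hcon α hα.1 hα.2
    exact hb.not_ge (hle b)
  obtain ⟨β, hβ, hpos⟩ := exists_mem_stdSimplex_forall_dotProduct_pos
    ⟨_, hrow (Classical.arbitrary A)⟩ ((convex_stdSimplex ℝ A).linear_image _)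
    ((isCompact_stdSimplex ℝ A).image (vecMulLinear M).continuous_of_finiteDimensional) hmixed
  obtain ⟨a, ha⟩ := h β hβ.1 hβ.2
  exact ha.not_gt (hpos (M a) (hrow a))

theorem stmt_3 {A B : Type*} [Fintype A] [Fintype B] [Nonempty A] [Nonempty B]
    (f : A × B → ℝ)
    (h : ∀ β : B → ℝ, (∀ b, 0 ≤ β b) → (∑ b : B, β b = 1) →
      ∃ a : A, ∑ b : B, β b * f (a, b) ≤ 0) :
    ∃ α : A → ℝ, (∀ a, 0 ≤ α a) ∧ (∑ a : A, α a = 1) ∧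
      ∀ b : B, ∑ a : A, α a * f (a, b) ≤ 0 :=
  stmt_3_general f h
end

section
/- Let 𝒳, 𝒵, H be nonempty finite types with |𝒵| = N, let μ₁ : 𝒳 → ℝ and ν : H → ℝ be probability mass functions, let t ≥ 1 be a natural number, and let P : H → 𝒳 → 𝒵 → ℝ be such that each P(h)(x) is a probability vector on 𝒵. Define P̄(x)(z) = ∑_h ν(h) · P(h)(x)(z). Then there exist h₁, …, h_t ∈ H with ν(h_j) > 0 for each j such that for EVERY function D : 𝒳 × 𝒵 → ℝ with |D(x,z)| ≤ 1 for all x,z: | ∑_x μ₁(x) ∑_z P̄(x)(z) · D(x,z) − (1/t) ∑_{j=1}^{t} ∑_x μ₁(x) ∑_z P(h_j)(x)(z) · D(x,z) | ≤ √(N / t). -/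
open Finset

lemma aux_Eprod {H : Type*} [Fintype H] {t : ℕ} (ν : H → ℝ) (f : Fin t → H → ℝ) :
    ∑ hs : Fin t → H, (∏ j, ν (hs j)) * ∏ j, f j (hs j) = ∏ j, ∑ h, ν h * f j h := by
  rw [Fintype.prod_sum (fun j h => ν h * f j h)]
  exact Finset.sum_congr rfl fun hs _ => by rw [← Finset.prod_mul_distrib]

lemma aux_prod_two {t : ℕ} {A B : ℝ} (j0 k0 : Fin t) (hjk : j0 ≠ k0) (g : Fin t → ℝ)
    (h0 : g j0 = A) (h1 : g k0 = B) (h2 : ∀ j, j ≠ j0 → j ≠ k0 → g j = 1) :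
    ∏ j, g j = A * B := by
  rw [← Finset.mul_prod_erase Finset.univ g (Finset.mem_univ j0), h0]
  congr 1
  have hk : k0 ∈ Finset.univ.erase j0 := Finset.mem_erase.2 ⟨Ne.symm hjk, Finset.mem_univ _⟩
  rw [← Finset.mul_prod_erase _ g hk, h1, Finset.prod_eq_one, mul_one]
  intro j hj
  simp only [Finset.mem_erase] at hj
  exact h2 j hj.2.1 hj.1

lemma aux_marg {H : Type*} [Fintype H] {t : ℕ} (ν : H → ℝ) (hν : ∑ h, ν h = 1)
    (F : H → ℝ) (j0 : Fin t) :
    ∑ hs : Fin t → H, (∏ j, ν (hs j)) * F (hs j0) = ∑ h, ν h * F h := by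
  calc ∑ hs : Fin t → H, (∏ j, ν (hs j)) * F (hs j0)
      = ∑ hs : Fin t → H, (∏ j, ν (hs j)) * ∏ j, (if j = j0 then F (hs j) else 1) := by
        apply Finset.sum_congr rfl; intro hs _
        congr 1
        rw [Finset.prod_ite_eq' Finset.univ j0 (fun j => F (hs j))]
        simp
    _ = ∏ j : Fin t, ∑ h, ν h * (if j = j0 then F h else 1) :=
        aux_Eprod ν (fun j h => if j = j0 then F h else 1)
    _ = ∏ j : Fin t, (if j = j0 then ∑ h, ν h * F h else 1) := by
        apply Finset.prod_congr rfl; intro j _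
        split_ifs <;> simp [hν]
    _ = ∑ h, ν h * F h := by
        rw [Finset.prod_ite_eq' Finset.univ j0 (fun _ => ∑ h, ν h * F h)]
        simp

lemma aux_pair {H : Type*} [Fintype H] {t : ℕ} (ν : H → ℝ) (hν : ∑ h, ν h = 1)
    (F G : H → ℝ) (j0 k0 : Fin t) (hjk : j0 ≠ k0) :
    ∑ hs : Fin t → H, (∏ j, ν (hs j)) * (F (hs j0) * G (hs k0))
      = (∑ h, ν h * F h) * (∑ h, ν h * G h) := by
  calc ∑ hs : Fin t → H, (∏ j, ν (hs j)) * (F (hs j0) * G (hs k0))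
      = ∑ hs : Fin t → H, (∏ j, ν (hs j)) *
          ∏ j, (if j = j0 then F (hs j) else if j = k0 then G (hs j) else 1) := by
        apply Finset.sum_congr rfl; intro hs _
        congr 1
        exact (aux_prod_two j0 k0 hjk _ (by simp) (by simp [Ne.symm hjk])
          (fun j h1 h2 => by simp [h1, h2])).symm
    _ = ∏ j : Fin t, ∑ h, ν h * (if j = j0 then F h else if j = k0 then G h else 1) :=
        aux_Eprod ν (fun j h => if j = j0 then F h else if j = k0 then G h else 1)
    _ = (∑ h, ν h * F h) * (∑ h, ν h * G h) := by
        apply aux_prod_two j0 k0 hjk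
        · simp
        · simp [Ne.symm hjk]
        · intro j h1 h2; simp [h1, h2, hν]
open Finset

section
variable {𝒳 𝒵 H : Type*} [Fintype 𝒳] [Fintype 𝒵] [Fintype H]

lemma aux_keyxz (ν : H → ℝ) (hν_nonneg : ∀ h, 0 ≤ ν h) (hν_sum : ∑ h : H, ν h = 1)
    (t : ℕ) (ht : 1 ≤ t)
    (P : H → 𝒳 → 𝒵 → ℝ)
    (hP_nonneg : ∀ h x z, 0 ≤ P h x z) (hP_sum : ∀ h x, ∑ z : 𝒵, P h x z = 1)
    (Pbar : 𝒳 → 𝒵 → ℝ) (hPbar : ∀ x z, Pbar x z = ∑ h : H, ν h * P h x z) (x : 𝒳) (z : 𝒵) :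
    ∑ hs : Fin t → H, (∏ j, ν (hs j)) * (Pbar x z - (1/(t:ℝ)) * ∑ j, P (hs j) x z)^2
      ≤ Pbar x z / t := by
  have htpos : (0:ℝ) < t := by exact_mod_cast Nat.lt_of_lt_of_le Nat.zero_lt_one ht
  have ht0 : (t:ℝ) ≠ 0 := ne_of_gt htpos
  set b := Pbar x z with hbdef
  set c : H → ℝ := fun h => P h x z - b with hcdef
  have hb : ∑ h, ν h * P h x z = b := (hPbar x z).symm
  have hc0 : ∑ h, ν h * c h = 0 := by
    simp only [hcdef, mul_sub, Finset.sum_sub_distrib, hb, ← Finset.sum_mul, hν_sum, one_mul,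
      sub_self]
  have he : ∀ hs : Fin t → H, (b - (1/(t:ℝ)) * ∑ j, P (hs j) x z)^2
      = (1/(t:ℝ))^2 * ∑ j, ∑ k, c (hs j) * c (hs k) := by
    intro hs
    have h1 : ∑ j, c (hs j) = (∑ j, P (hs j) x z) - t * b := by
      simp [hcdef, Finset.sum_sub_distrib, Finset.card_univ, mul_comm]
    have h2 : b - (1/(t:ℝ)) * ∑ j, P (hs j) x z = -((1/(t:ℝ)) * ∑ j, c (hs j)) := by
      rw [h1]; field_simp; ring
    rw [h2, neg_sq, mul_pow, sq (∑ j, c (hs j)), Finset.sum_mul_sum]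
  set V := ∑ h, ν h * (c h * c h) with hVdef
  have pairE : ∀ j k : Fin t, ∑ hs : Fin t → H, (∏ j', ν (hs j')) * (c (hs j) * c (hs k))
      = if j = k then V else 0 := by
    intro j k
    by_cases hjk : j = k
    · subst hjk; simp only [if_pos rfl]
      exact aux_marg ν hν_sum (fun h => c h * c h) j
    · rw [if_neg hjk, aux_pair ν hν_sum c c j k hjk, hc0, mul_zero]
  have main : ∑ hs : Fin t → H, (∏ j, ν (hs j)) * (b - (1/(t:ℝ)) * ∑ j, P (hs j) x z)^2
      = V / t := by
    calc ∑ hs : Fin t → H, (∏ j, ν (hs j)) * (b - (1/(t:ℝ)) * ∑ j, P (hs j) x z)^2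
        = (1/(t:ℝ))^2 * ∑ hs : Fin t → H, ∑ j, ∑ k,
            (∏ j', ν (hs j')) * (c (hs j) * c (hs k)) := by
          simp_rw [he, Finset.mul_sum]
          refine Finset.sum_congr rfl fun hs _ => Finset.sum_congr rfl fun j _ =>
            Finset.sum_congr rfl fun k _ => by ring
      _ = (1/(t:ℝ))^2 * ∑ j : Fin t, ∑ k : Fin t, ∑ hs : Fin t → H,
            (∏ j', ν (hs j')) * (c (hs j) * c (hs k)) := by
          rw [Finset.sum_comm]
          congr 1
          refine Finset.sum_congr rfl fun j _ => ?_
          rw [Finset.sum_comm]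
      _ = (1/(t:ℝ))^2 * ∑ j : Fin t, ∑ k : Fin t, (if j = k then V else 0) := by
          congr 1
          exact Finset.sum_congr rfl fun j _ => Finset.sum_congr rfl fun k _ => pairE j k
      _ = (1/(t:ℝ))^2 * (t * V) := by
          congr 1
          simp [Finset.sum_ite_eq, Finset.card_univ, mul_comm]
      _ = V / t := by field_simp
  rw [main]
  have hVle : V ≤ b := by
    have hM2 : V = (∑ h, ν h * (P h x z * P h x z)) - b * b := by
      calc V = ∑ h, (ν h * (P h x z * P h x z) - (2*b) * (ν h * P h x z) + (b*b) * ν h) :=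
            Finset.sum_congr rfl fun h _ => by simp only [hcdef]; ring
        _ = (∑ h, ν h * (P h x z * P h x z)) - (2*b) * b + (b*b) * 1 := by
            rw [Finset.sum_add_distrib, Finset.sum_sub_distrib, ← Finset.mul_sum,
              ← Finset.mul_sum, hb, hν_sum]
        _ = _ := by ring
    have hM2le : (∑ h, ν h * (P h x z * P h x z)) ≤ b := by
      rw [← hb]
      refine Finset.sum_le_sum fun h _ => ?_
      have hle1 : P h x z ≤ 1 := by
        calc P h x z ≤ ∑ z', P h x z' :=
              Finset.single_le_sum (fun z' _ => hP_nonneg h x z') (Finset.mem_univ z)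
          _ = 1 := hP_sum h x
      have hpp : P h x z * P h x z ≤ P h x z := by
        nlinarith [mul_nonneg (hP_nonneg h x z) (sub_nonneg.2 hle1)]
      exact mul_le_mul_of_nonneg_left hpp (hν_nonneg h)
    nlinarith [hM2]
  gcongr

end
open Finset

theorem stmt_7 {𝒳 𝒵 H : Type*} [Fintype 𝒳] [Fintype 𝒵] [Fintype H]
    [Nonempty 𝒳] [Nonempty 𝒵] [Nonempty H]
    (N : ℕ) (hN : Fintype.card 𝒵 = N)
    (μ₁ : 𝒳 → ℝ) (hμ₁_nonneg : ∀ x, 0 ≤ μ₁ x) (hμ₁_sum : ∑ x : 𝒳, μ₁ x = 1)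
    (ν : H → ℝ) (hν_nonneg : ∀ h, 0 ≤ ν h) (hν_sum : ∑ h : H, ν h = 1)
    (t : ℕ) (ht : 1 ≤ t)
    (P : H → 𝒳 → 𝒵 → ℝ)
    (hP_nonneg : ∀ h x z, 0 ≤ P h x z) (hP_sum : ∀ h x, ∑ z : 𝒵, P h x z = 1)
    (Pbar : 𝒳 → 𝒵 → ℝ) (hPbar : ∀ x z, Pbar x z = ∑ h : H, ν h * P h x z) :
    ∃ hs : Fin t → H, (∀ j, 0 < ν (hs j)) ∧
      ∀ D : 𝒳 × 𝒵 → ℝ, (∀ x z, |D (x, z)| ≤ 1) →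
        |(∑ x : 𝒳, μ₁ x * ∑ z : 𝒵, Pbar x z * D (x, z))
            - (1 / (t : ℝ)) * ∑ j : Fin t, ∑ x : 𝒳, μ₁ x * ∑ z : 𝒵, P (hs j) x z * D (x, z)|
          ≤ Real.sqrt ((N : ℝ) / (t : ℝ)) := by
  classical
  have htpos : (0:ℝ) < t := by exact_mod_cast Nat.lt_of_lt_of_le Nat.zero_lt_one ht
  have ht0 : (t:ℝ) ≠ 0 := ne_of_gt htpos
  set w : (Fin t → H) → ℝ := fun hs => ∏ j, ν (hs j) with hwdef
  have hw_nonneg : ∀ hs, 0 ≤ w hs := fun hs => Finset.prod_nonneg fun j _ => hν_nonneg _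
  have hw_sum : ∑ hs : Fin t → H, w hs = 1 := by
    have h := aux_Eprod (t := t) ν (fun _ _ => (1:ℝ))
    simpa [hν_sum] using h
  have hPbar_nonneg : ∀ x z, 0 ≤ Pbar x z := fun x z => by
    rw [hPbar]; exact Finset.sum_nonneg fun h _ => mul_nonneg (hν_nonneg h) (hP_nonneg h x z)
  have hPbar_sumz : ∀ x, ∑ z, Pbar x z = 1 := fun x => by
    simp_rw [hPbar]
    rw [Finset.sum_comm]
    simp_rw [← Finset.mul_sum, hP_sum, mul_one, hν_sum]
  set Q : (Fin t → H) → ℝ :=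
    fun hs => ∑ x, μ₁ x * ∑ z, (Pbar x z - (1/(t:ℝ)) * ∑ j, P (hs j) x z)^2 with hQdef
  have keyQ : ∑ hs : Fin t → H, w hs * Q hs ≤ 1 / t := by
    have swap : ∑ hs : Fin t → H, w hs * Q hs
        = ∑ x, μ₁ x * ∑ z, ∑ hs : Fin t → H,
            w hs * (Pbar x z - (1/(t:ℝ)) * ∑ j, P (hs j) x z)^2 := by
      simp_rw [hQdef, Finset.mul_sum]
      rw [Finset.sum_comm]
      refine Finset.sum_congr rfl fun x _ => ?_
      rw [Finset.sum_comm]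
      exact Finset.sum_congr rfl fun z _ => Finset.sum_congr rfl fun hs _ => by ring
    rw [swap]
    calc ∑ x, μ₁ x * ∑ z, ∑ hs : Fin t → H,
            w hs * (Pbar x z - (1/(t:ℝ)) * ∑ j, P (hs j) x z)^2
        ≤ ∑ x, μ₁ x * ∑ z, Pbar x z / t := by
          refine Finset.sum_le_sum fun x _ => ?_
          refine mul_le_mul_of_nonneg_left ?_ (hμ₁_nonneg x)
          exact Finset.sum_le_sum fun z _ =>
            aux_keyxz ν hν_nonneg hν_sum t ht P hP_nonneg hP_sum Pbar hPbar x z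
      _ = 1 / t := by
          simp_rw [← Finset.sum_div, hPbar_sumz]
          rw [← Finset.sum_mul, hμ₁_sum, one_mul]
  obtain ⟨hs0, hw0, hQ0⟩ : ∃ hs : Fin t → H, 0 < w hs ∧ Q hs ≤ 1 / t := by
    by_contra hcon
    push_neg at hcon
    obtain ⟨hs1, hpos⟩ : ∃ hs : Fin t → H, 0 < w hs := by
      by_contra hall
      push_neg at hall
      have : ∑ hs : Fin t → H, w hs = 0 :=
        Finset.sum_eq_zero fun hs _ => le_antisymm (hall hs) (hw_nonneg hs)
      rw [hw_sum] at this; norm_num at this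
    have hlt : ∑ hs : Fin t → H, w hs * (1/(t:ℝ)) < ∑ hs : Fin t → H, w hs * Q hs := by
      refine Finset.sum_lt_sum (fun hs _ => ?_) ⟨hs1, Finset.mem_univ _, ?_⟩
      · rcases eq_or_lt_of_le (hw_nonneg hs) with h0 | h0
        · rw [← h0]; simp
        · exact mul_le_mul_of_nonneg_left (le_of_lt (hcon hs h0)) (le_of_lt h0)
      · exact mul_lt_mul_of_pos_left (hcon hs1 hpos) hpos
    rw [← Finset.sum_mul, hw_sum, one_mul] at hlt
    linarith
  have hνpos : ∀ j, 0 < ν (hs0 j) := by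
    intro j
    have hne : w hs0 ≠ 0 := ne_of_gt hw0
    rw [hwdef] at hne
    have := Finset.prod_ne_zero_iff.1 hne j (Finset.mem_univ j)
    exact lt_of_le_of_ne (hν_nonneg _) (Ne.symm this)
  refine ⟨hs0, hνpos, fun D hD => ?_⟩
  set g : 𝒳 → 𝒵 → ℝ := fun x z => Pbar x z - (1/(t:ℝ)) * ∑ j, P (hs0 j) x z with hgdef
  have rearr : (∑ x : 𝒳, μ₁ x * ∑ z : 𝒵, Pbar x z * D (x, z))
      - (1 / (t : ℝ)) * ∑ j : Fin t, ∑ x : 𝒳, μ₁ x * ∑ z : 𝒵, P (hs0 j) x z * D (x, z)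
      = ∑ x, μ₁ x * ∑ z, g x z * D (x, z) := by
    have h2 : (1/(t:ℝ)) * ∑ j : Fin t, ∑ x : 𝒳, μ₁ x * ∑ z : 𝒵, P (hs0 j) x z * D (x, z)
        = ∑ x, μ₁ x * ∑ z, ((1/(t:ℝ)) * ∑ j, P (hs0 j) x z) * D (x, z) := by
      simp_rw [Finset.mul_sum, Finset.sum_mul]
      rw [Finset.sum_comm]
      refine Finset.sum_congr rfl fun x _ => ?_
      rw [Finset.sum_comm]
      refine Finset.sum_congr rfl fun z _ => ?_
      rw [Finset.mul_sum]
      exact Finset.sum_congr rfl fun j _ => by ring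
    rw [h2, ← Finset.sum_sub_distrib]
    refine Finset.sum_congr rfl fun x _ => ?_
    rw [← mul_sub, ← Finset.sum_sub_distrib]
    refine congrArg _ (Finset.sum_congr rfl fun z _ => ?_)
    rw [hgdef]; ring
  rw [rearr]
  set T := ∑ x, μ₁ x * ∑ z, |g x z| with hTdef
  have tri : |∑ x, μ₁ x * ∑ z, g x z * D (x, z)| ≤ T := by
    refine (Finset.abs_sum_le_sum_abs _ _).trans (Finset.sum_le_sum fun x _ => ?_)
    rw [abs_mul, abs_of_nonneg (hμ₁_nonneg x)]
    refine mul_le_mul_of_nonneg_left ((Finset.abs_sum_le_sum_abs _ _).trans ?_) (hμ₁_nonneg x)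
    refine Finset.sum_le_sum fun z _ => ?_
    rw [abs_mul]
    exact mul_le_of_le_one_right (abs_nonneg _) (hD x z)
  have hT0 : 0 ≤ T :=
    Finset.sum_nonneg fun x _ => mul_nonneg (hμ₁_nonneg x)
      (Finset.sum_nonneg fun z _ => abs_nonneg _)
  have hCS : T^2 ≤ N * Q hs0 := by
    have cs := Finset.sum_mul_sq_le_sq_mul_sq Finset.univ
      (fun p : 𝒳 × 𝒵 => Real.sqrt (μ₁ p.1))
      (fun p : 𝒳 × 𝒵 => Real.sqrt (μ₁ p.1) * |g p.1 p.2|)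
    have e1 : T = ∑ p : 𝒳 × 𝒵, Real.sqrt (μ₁ p.1) * (Real.sqrt (μ₁ p.1) * |g p.1 p.2|) := by
      rw [hTdef, Fintype.sum_prod_type]
      refine Finset.sum_congr rfl fun x _ => ?_
      rw [Finset.mul_sum]
      refine Finset.sum_congr rfl fun z _ => ?_
      rw [← mul_assoc, Real.mul_self_sqrt (hμ₁_nonneg x)]
    have e2 : ∑ p : 𝒳 × 𝒵, Real.sqrt (μ₁ p.1) ^ 2 = (N:ℝ) := by
      rw [Fintype.sum_prod_type]
      simp_rw [Real.sq_sqrt (hμ₁_nonneg _), Finset.sum_const, Finset.card_univ, hN, nsmul_eq_mul]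
      rw [← Finset.mul_sum, hμ₁_sum, mul_one]
    have e3 : ∑ p : 𝒳 × 𝒵, (Real.sqrt (μ₁ p.1) * |g p.1 p.2|) ^ 2 = Q hs0 := by
      rw [Fintype.sum_prod_type, hQdef]
      refine Finset.sum_congr rfl fun x _ => ?_
      rw [Finset.mul_sum]
      refine Finset.sum_congr rfl fun z _ => ?_
      rw [mul_pow, Real.sq_sqrt (hμ₁_nonneg x), sq_abs]
    rw [e1]
    calc (∑ p : 𝒳 × 𝒵, Real.sqrt (μ₁ p.1) * (Real.sqrt (μ₁ p.1) * |g p.1 p.2|))^2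
        ≤ (∑ p : 𝒳 × 𝒵, Real.sqrt (μ₁ p.1) ^ 2) *
          ∑ p : 𝒳 × 𝒵, (Real.sqrt (μ₁ p.1) * |g p.1 p.2|) ^ 2 := cs
      _ = N * Q hs0 := by rw [e2, e3]
  have hfinal : T ≤ Real.sqrt ((N:ℝ)/(t:ℝ)) := by
    rw [← Real.sqrt_sq hT0]
    apply Real.sqrt_le_sqrt
    calc T^2 ≤ N * Q hs0 := hCS
      _ ≤ N * (1/t) := mul_le_mul_of_nonneg_left hQ0 (Nat.cast_nonneg N)
      _ = N / t := by ring
  exact tri.trans hfinal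
end

section
/- Let 𝒳, 𝒵, H be nonempty finite types with |𝒵| = N, let μ₁ : 𝒳 → ℝ and ν : H → ℝ be probability mass functions, and let P : H → 𝒳 → 𝒵 → ℝ be such that each P(h)(x) is a probability vector on 𝒵; define P̄(x)(z) = ∑_h ν(h) · P(h)(x)(z). Then for every real ε > 0 there exist a natural number t with 1 ≤ t ≤ ⌈N / ε²⌉ and elements h₁, …, h_t ∈ H with ν(h_j) > 0 for each j, such that for every function D : 𝒳 × 𝒵 → ℝ with |D(x,z)| ≤ 1 for all x,z: | ∑_x μ₁(x) ∑_z P̄(x)(z) · D(x,z) − (1/t) ∑_{j=1}^{t} ∑_x μ₁(x) ∑_z P(h_j)(x)(z) · D(x,z) | ≤ ε. -/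
open Finset Real

section Helpers

variable {H : Type*} [Fintype H] {t : ℕ}
variable (ν : H → ℝ)

/-- Expectation of a single-coordinate function under the product measure. -/
lemma exp_single (hν_sum : ∑ h : H, ν h = 1) (f : H → ℝ) (j : Fin t) :
    ∑ hs : Fin t → H, (∏ i, ν (hs i)) * f (hs j) = ∑ h, ν h * f h := by
  classical
  have key : ∀ hs : Fin t → H,
      (∏ i, ν (hs i)) * f (hs j) = ∏ i, (ν (hs i) * (if i = j then f (hs i) else 1)) := by
    intro hs
    rw [Finset.prod_mul_distrib]
    congr 1
    rw [Finset.prod_ite_eq' Finset.univ j (fun i => f (hs i))]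
    simp
  simp_rw [key]
  rw [← Fintype.prod_sum (fun i h => ν h * (if i = j then f h else 1))]
  have : ∀ i : Fin t, (∑ h, ν h * (if i = j then f h else 1))
      = if i = j then (∑ h, ν h * f h) else 1 := by
    intro i
    by_cases hij : i = j
    · simp [hij]
    · simp [hij, hν_sum]
  simp_rw [this]
  rw [Finset.prod_ite_eq' Finset.univ j (fun _ => ∑ h, ν h * f h)]
  simp

/-- Expectation of a two-coordinate product under the product measure (independence). -/
lemma exp_pair (hν_sum : ∑ h : H, ν h = 1) (f g : H → ℝ) (j k : Fin t) (hjk : j ≠ k) :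
    ∑ hs : Fin t → H, (∏ i, ν (hs i)) * (f (hs j) * g (hs k))
      = (∑ h, ν h * f h) * (∑ h, ν h * g h) := by
  classical
  set φ : Fin t → H → ℝ := fun i h => if i = j then f h else if i = k then g h else 1 with hφ
  have key : ∀ hs : Fin t → H,
      (∏ i, ν (hs i)) * (f (hs j) * g (hs k)) = ∏ i, (ν (hs i) * φ i (hs i)) := by
    intro hs
    rw [Finset.prod_mul_distrib]
    congr 1
    have h1 : ∏ i, φ i (hs i) = ∏ i ∈ ({j, k} : Finset (Fin t)), φ i (hs i) := by
      refine (Finset.prod_subset (Finset.subset_univ _) ?_).symm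
      intro i _ hi
      simp only [Finset.mem_insert, Finset.mem_singleton, not_or] at hi
      simp [hφ, hi.1, hi.2]
    rw [h1, Finset.prod_pair hjk]
    simp [hφ, hjk, (Ne.symm hjk)]
  simp_rw [key]
  rw [← Fintype.prod_sum (fun i h => ν h * φ i h)]
  have hval : ∀ i : Fin t, (∑ h, ν h * φ i h)
      = if i = j then (∑ h, ν h * f h) else if i = k then (∑ h, ν h * g h) else 1 := by
    intro i
    by_cases hij : i = j
    · simp [hφ, hij]
    · by_cases hik : i = k
      · simp [hφ, hij, hik]
      · simp [hφ, hij, hik, hν_sum]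
  simp_rw [hval]
  have h1 : (∏ i : Fin t, (if i = j then (∑ h, ν h * f h) else if i = k then (∑ h, ν h * g h) else 1))
      = ∏ i ∈ ({j, k} : Finset (Fin t)), (if i = j then (∑ h, ν h * f h) else if i = k then (∑ h, ν h * g h) else 1) := by
    refine (Finset.prod_subset (Finset.subset_univ _) ?_).symm
    intro i _ hi
    simp only [Finset.mem_insert, Finset.mem_singleton, not_or] at hi
    simp [hi.1, hi.2]
  rw [h1, Finset.prod_pair hjk]
  simp [hjk, Ne.symm hjk]

end Helpers

theorem stmt_8 {𝒳 𝒵 H : Type*} [Fintype 𝒳] [Fintype 𝒵] [Fintype H]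
    [Nonempty 𝒳] [Nonempty 𝒵] [Nonempty H]
    (N : ℕ) (hN : Fintype.card 𝒵 = N)
    (μ₁ : 𝒳 → ℝ) (hμ₁_nonneg : ∀ x, 0 ≤ μ₁ x) (hμ₁_sum : ∑ x : 𝒳, μ₁ x = 1)
    (ν : H → ℝ) (hν_nonneg : ∀ h, 0 ≤ ν h) (hν_sum : ∑ h : H, ν h = 1)
    (P : H → 𝒳 → 𝒵 → ℝ)
    (hP_nonneg : ∀ h x z, 0 ≤ P h x z) (hP_sum : ∀ h x, ∑ z : 𝒵, P h x z = 1)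
    (Pbar : 𝒳 → 𝒵 → ℝ) (hPbar : ∀ x z, Pbar x z = ∑ h : H, ν h * P h x z)
    (ε : ℝ) (hε : 0 < ε) :
    ∃ t : ℕ, 1 ≤ t ∧ t ≤ ⌈(N : ℝ) / ε ^ 2⌉₊ ∧
      ∃ hs : Fin t → H, (∀ j, 0 < ν (hs j)) ∧
        ∀ D : 𝒳 × 𝒵 → ℝ, (∀ x z, |D (x, z)| ≤ 1) →
          |(∑ x : 𝒳, μ₁ x * ∑ z : 𝒵, Pbar x z * D (x, z))
              - (1 / (t : ℝ)) * ∑ j : Fin t, ∑ x : 𝒳, μ₁ x * ∑ z : 𝒵, P (hs j) x z * D (x, z)|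
            ≤ ε := by
  classical
  have hN0 : 0 < N := hN ▸ Fintype.card_pos
  set t : ℕ := ⌈(N : ℝ) / ε ^ 2⌉₊ with ht_def
  have ht1 : 1 ≤ t := Nat.one_le_iff_ne_zero.mpr (by
    have : (0:ℝ) < (N : ℝ) / ε ^ 2 := div_pos (by exact_mod_cast hN0) (by positivity)
    exact (Nat.ceil_pos.mpr this).ne')
  have ht0 : (0:ℝ) < (t:ℝ) := by exact_mod_cast Nat.lt_of_lt_of_le Nat.zero_lt_one ht1
  have htN : (N:ℝ) ≤ ε ^ 2 * t := by
    have h1 : (N:ℝ) / ε ^ 2 ≤ t := Nat.le_ceil _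
    calc (N:ℝ) = ((N:ℝ) / ε ^ 2) * ε ^ 2 := by field_simp
    _ ≤ (t:ℝ) * ε ^ 2 := by
        apply mul_le_mul_of_nonneg_right h1 (by positivity)
    _ = ε ^ 2 * t := by ring
  refine ⟨t, ht1, le_refl _, ?_⟩
  -- product measure weight
  set W : (Fin t → H) → ℝ := fun hs => ∏ i, ν (hs i) with hW_def
  have hW_nonneg : ∀ hs, 0 ≤ W hs := fun hs => Finset.prod_nonneg fun i _ => hν_nonneg _
  have hW_sum : ∑ hs : Fin t → H, W hs = 1 := by
    rw [hW_def]
    rw [← Fintype.prod_sum (fun (_ : Fin t) h => ν h)]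
    simp [hν_sum]
  -- centered variables
  set Y : 𝒳 → 𝒵 → H → ℝ := fun x z h => P h x z - Pbar x z with hY_def
  set S : 𝒳 → 𝒵 → (Fin t → H) → ℝ := fun x z hs => ∑ j, Y x z (hs j) with hS_def
  set V : 𝒳 → 𝒵 → ℝ := fun x z => ∑ h, ν h * (Y x z h) ^ 2 with hV_def
  have hYmean : ∀ x z, ∑ h, ν h * Y x z h = 0 := by
    intro x z
    simp only [hY_def, mul_sub, Finset.sum_sub_distrib]
    rw [← hPbar, ← Finset.sum_mul, hν_sum, one_mul, sub_self]
  have hV_nonneg : ∀ x z, 0 ≤ V x z :=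
    fun x z => Finset.sum_nonneg fun h _ => mul_nonneg (hν_nonneg h) (sq_nonneg _)
  -- second moment
  have hS2 : ∀ x z, ∑ hs : Fin t → H, W hs * (S x z hs) ^ 2 = t * V x z := by
    intro x z
    have expand : ∀ hs : Fin t → H, W hs * (S x z hs) ^ 2
        = ∑ j : Fin t, ∑ k : Fin t, W hs * (Y x z (hs j) * Y x z (hs k)) := by
      intro hs
      rw [hS_def, sq, Finset.sum_mul_sum, Finset.mul_sum]
      exact Finset.sum_congr rfl fun j _ => by rw [Finset.mul_sum]
    rw [Finset.sum_congr rfl fun hs _ => expand hs]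
    rw [Finset.sum_comm]
    have inner : ∀ j : Fin t, ∑ k : Fin t, ∑ hs : Fin t → H, W hs * (Y x z (hs j) * Y x z (hs k))
        = V x z := by
      intro j
      have term : ∀ k : Fin t, ∑ hs : Fin t → H, W hs * (Y x z (hs j) * Y x z (hs k))
          = if k = j then V x z else 0 := by
        intro k
        by_cases hjk : k = j
        · subst hjk
          simp only [if_true]
          have := exp_single ν hν_sum (fun h => Y x z h * Y x z h) k
          rw [hW_def]
          simpa [sq, hV_def] using this
        · rw [if_neg hjk]
          have := exp_pair ν hν_sum (Y x z) (Y x z) j k (Ne.symm hjk)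
          rw [hW_def]
          rw [this, hYmean x z, mul_zero]
      rw [Finset.sum_congr rfl fun k _ => term k]
      simp
    rw [Finset.sum_congr rfl fun k _ => by
      rw [Finset.sum_comm]]
    rw [Finset.sum_congr rfl fun j _ => inner j]
    simp [mul_comm]
  -- first absolute moment via Cauchy-Schwarz
  have habs : ∀ x z, ∑ hs : Fin t → H, W hs * |S x z hs| ≤ Real.sqrt ((t:ℝ) * V x z) := by
    intro x z
    have hnn : 0 ≤ ∑ hs : Fin t → H, W hs * |S x z hs| :=
      Finset.sum_nonneg fun hs _ => mul_nonneg (hW_nonneg hs) (abs_nonneg _)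
    rw [show ((t:ℝ) * V x z) = ∑ hs : Fin t → H, W hs * (S x z hs) ^ 2 from (hS2 x z).symm]
    have CS := Finset.sum_mul_sq_le_sq_mul_sq Finset.univ
      (fun hs : Fin t → H => Real.sqrt (W hs))
      (fun hs : Fin t → H => Real.sqrt (W hs) * |S x z hs|)
    have e1 : ∀ hs : Fin t → H, Real.sqrt (W hs) * (Real.sqrt (W hs) * |S x z hs|)
        = W hs * |S x z hs| := by
      intro hs
      rw [← mul_assoc, Real.mul_self_sqrt (hW_nonneg hs)]
    have e2 : ∀ hs : Fin t → H, (Real.sqrt (W hs)) ^ 2 = W hs :=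
      fun hs => Real.sq_sqrt (hW_nonneg hs)
    have e3 : ∀ hs : Fin t → H, (Real.sqrt (W hs) * |S x z hs|) ^ 2 = W hs * (S x z hs) ^ 2 := by
      intro hs
      rw [mul_pow, Real.sq_sqrt (hW_nonneg hs), sq_abs]
    rw [Finset.sum_congr rfl fun hs _ => e1 hs, Finset.sum_congr rfl fun hs _ => e2 hs,
      Finset.sum_congr rfl fun hs _ => e3 hs, hW_sum, one_mul] at CS
    have : 0 ≤ ∑ hs : Fin t → H, W hs * (S x z hs) ^ 2 :=
      Finset.sum_nonneg fun hs _ => mul_nonneg (hW_nonneg hs) (sq_nonneg _)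
    exact (Real.le_sqrt hnn this).mpr CS
  -- variance sum bound
  have hP_le_one : ∀ h x z, P h x z ≤ 1 := by
    intro h x z
    calc P h x z ≤ ∑ z' : 𝒵, P h x z' :=
      Finset.single_le_sum (fun z' _ => hP_nonneg h x z') (Finset.mem_univ z)
    _ = 1 := hP_sum h x
  have hV_le : ∀ x z, V x z ≤ ∑ h, ν h * P h x z := by
    intro x z
    have expand : ∀ h : H, ν h * (Y x z h) ^ 2
        = ν h * (P h x z * P h x z) - 2 * Pbar x z * (ν h * P h x z) + (Pbar x z) ^ 2 * ν h := by
      intro h; rw [hY_def]; ring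
    simp only [hV_def]
    rw [Finset.sum_congr rfl fun h _ => expand h]
    rw [Finset.sum_add_distrib, Finset.sum_sub_distrib, ← Finset.mul_sum, ← Finset.mul_sum,
      ← hPbar, hν_sum, mul_one]
    have h1 : ∑ h, ν h * (P h x z * P h x z) ≤ ∑ h, ν h * P h x z := by
      apply Finset.sum_le_sum
      intro h _
      apply mul_le_mul_of_nonneg_left _ (hν_nonneg h)
      calc P h x z * P h x z ≤ 1 * P h x z :=
        mul_le_mul_of_nonneg_right (hP_le_one h x z) (hP_nonneg h x z)
      _ = P h x z := one_mul _
    rw [← hPbar x z] at h1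
    nlinarith [sq_nonneg (Pbar x z)]
  have hVsum : ∀ x, ∑ z, V x z ≤ 1 := by
    intro x
    calc ∑ z, V x z ≤ ∑ z, ∑ h, ν h * P h x z :=
      Finset.sum_le_sum fun z _ => hV_le x z
    _ = ∑ h, ν h * ∑ z, P h x z := by
        rw [Finset.sum_comm]
        exact Finset.sum_congr rfl fun h _ => (Finset.mul_sum _ _ _).symm
    _ = 1 := by simp only [hP_sum]; simp [hν_sum]
  -- Cauchy-Schwarz over z
  have hzCS : ∀ x, ∑ z, Real.sqrt ((t:ℝ) * V x z) ≤ Real.sqrt ((N:ℝ) * t) := by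
    intro x
    have hnn : 0 ≤ ∑ z, Real.sqrt ((t:ℝ) * V x z) :=
      Finset.sum_nonneg fun z _ => Real.sqrt_nonneg _
    rw [Real.le_sqrt hnn (by positivity)]
    have CS := Finset.sum_mul_sq_le_sq_mul_sq Finset.univ
      (fun _ : 𝒵 => (1:ℝ)) (fun z => Real.sqrt ((t:ℝ) * V x z))
    simp only [one_mul, one_pow] at CS
    have e : ∀ z : 𝒵, (Real.sqrt ((t:ℝ) * V x z)) ^ 2 = (t:ℝ) * V x z := by
      intro z
      exact Real.sq_sqrt (mul_nonneg ht0.le (hV_nonneg x z))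
    rw [Finset.sum_congr rfl fun z _ => e z] at CS
    calc (∑ z, Real.sqrt ((t:ℝ) * V x z)) ^ 2
        ≤ (∑ _z : 𝒵, (1:ℝ)) * ∑ z, (t:ℝ) * V x z := CS
    _ = (N:ℝ) * ((t:ℝ) * ∑ z, V x z) := by
        rw [Finset.sum_const, ← Finset.mul_sum]
        simp [hN]
    _ ≤ (N:ℝ) * ((t:ℝ) * 1) := by
        apply mul_le_mul_of_nonneg_left _ (Nat.cast_nonneg N)
        exact mul_le_mul_of_nonneg_left (hVsum x) ht0.le
    _ = (N:ℝ) * t := by ring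
  -- the error functional
  set err : (Fin t → H) → ℝ :=
    fun hs => ∑ x, μ₁ x * ∑ z, |Pbar x z - (1 / (t:ℝ)) * ∑ j, P (hs j) x z| with herr_def
  have hErrEq : ∀ hs x z, |Pbar x z - (1 / (t:ℝ)) * ∑ j, P (hs j) x z|
      = (1 / (t:ℝ)) * |S x z hs| := by
    intro hs x z
    have : Pbar x z - (1 / (t:ℝ)) * ∑ j, P (hs j) x z = -((1 / (t:ℝ)) * S x z hs) := by
      rw [hS_def, hY_def]
      simp only [Finset.sum_sub_distrib, Finset.sum_const, Finset.card_univ, Fintype.card_fin,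
        nsmul_eq_mul]
      field_simp
      ring
    rw [this, abs_neg, abs_mul, abs_of_pos (by positivity : (0:ℝ) < 1 / (t:ℝ))]
  -- expected error is at most ε
  have hE : ∑ hs : Fin t → H, W hs * err hs ≤ ε := by
    have swap : ∑ hs : Fin t → H, W hs * err hs
        = ∑ x, ∑ z, (μ₁ x * (1 / (t:ℝ))) * ∑ hs : Fin t → H, W hs * |S x z hs| := by
      simp only [herr_def]
      simp_rw [hErrEq, Finset.mul_sum]
      rw [Finset.sum_comm]
      refine Finset.sum_congr rfl fun x _ => ?_
      rw [Finset.sum_comm]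
      refine Finset.sum_congr rfl fun z _ => ?_
      refine Finset.sum_congr rfl fun hs _ => ?_
      ring
    rw [swap]
    calc ∑ x, ∑ z, (μ₁ x * (1 / (t:ℝ))) * ∑ hs : Fin t → H, W hs * |S x z hs|
        ≤ ∑ x, ∑ z, (μ₁ x * (1 / (t:ℝ))) * Real.sqrt ((t:ℝ) * V x z) := by
          refine Finset.sum_le_sum fun x _ => Finset.sum_le_sum fun z _ => ?_
          exact mul_le_mul_of_nonneg_left (habs x z)
            (mul_nonneg (hμ₁_nonneg x) (by positivity))
    _ = ∑ x, (μ₁ x * (1 / (t:ℝ))) * ∑ z, Real.sqrt ((t:ℝ) * V x z) := by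
          exact Finset.sum_congr rfl fun x _ => (Finset.mul_sum _ _ _).symm
    _ ≤ ∑ x, (μ₁ x * (1 / (t:ℝ))) * Real.sqrt ((N:ℝ) * t) := by
          refine Finset.sum_le_sum fun x _ => ?_
          exact mul_le_mul_of_nonneg_left (hzCS x)
            (mul_nonneg (hμ₁_nonneg x) (by positivity))
    _ = (1 / (t:ℝ)) * Real.sqrt ((N:ℝ) * t) := by
          rw [← Finset.sum_mul, ← Finset.sum_mul, hμ₁_sum, one_mul]
    _ ≤ ε := by
          rw [div_mul_eq_mul_div, one_mul, div_le_iff₀ ht0]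
          calc Real.sqrt ((N:ℝ) * t) ≤ Real.sqrt ((ε * t) ^ 2) := by
                apply Real.sqrt_le_sqrt
                calc (N:ℝ) * t ≤ (ε ^ 2 * t) * t :=
                  mul_le_mul_of_nonneg_right htN ht0.le
                _ = (ε * t) ^ 2 := by ring
          _ = ε * t := Real.sqrt_sq (by positivity)
  -- choose a good tuple
  have hgood : ∃ hs : Fin t → H, 0 < W hs ∧ err hs ≤ ε := by
    by_contra hcon
    push_neg at hcon
    obtain ⟨hs₀, -, hhs₀⟩ := Finset.exists_ne_zero_of_sum_ne_zero
      (by rw [hW_sum]; exact one_ne_zero : ∑ hs : Fin t → H, W hs ≠ 0)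
    have hpos₀ : 0 < W hs₀ := lt_of_le_of_ne (hW_nonneg hs₀) (Ne.symm hhs₀)
    have hstrict : ∑ hs : Fin t → H, W hs * ε < ∑ hs : Fin t → H, W hs * err hs := by
      apply Finset.sum_lt_sum
      · intro hs _
        rcases eq_or_lt_of_le (hW_nonneg hs) with h0 | h0
        · rw [← h0]; simp
        · exact mul_le_mul_of_nonneg_left (hcon hs h0).le h0.le
      · exact ⟨hs₀, Finset.mem_univ _, by
          exact mul_lt_mul_of_pos_left (hcon hs₀ hpos₀) hpos₀⟩
    rw [← Finset.sum_mul, hW_sum, one_mul] at hstrict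
    exact absurd hE (not_le.mpr hstrict)
  obtain ⟨hs, hWpos, herr_le⟩ := hgood
  have hνpos : ∀ j, 0 < ν (hs j) := by
    intro j
    rcases eq_or_lt_of_le (hν_nonneg (hs j)) with h0 | h0
    · exfalso
      have : W hs = 0 := Finset.prod_eq_zero (Finset.mem_univ j) h0.symm
      rw [this] at hWpos; exact lt_irrefl 0 hWpos
    · exact h0
  refine ⟨hs, hνpos, ?_⟩
  intro D hD
  set Δ : 𝒳 → 𝒵 → ℝ := fun x z => Pbar x z - (1 / (t:ℝ)) * ∑ j, P (hs j) x z with hΔ_def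
  have key : (∑ x, μ₁ x * ∑ z, Pbar x z * D (x, z))
      - (1 / (t:ℝ)) * ∑ j : Fin t, ∑ x, μ₁ x * ∑ z, P (hs j) x z * D (x, z)
      = ∑ x, μ₁ x * ∑ z, Δ x z * D (x, z) := by
    have h2 : (1 / (t:ℝ)) * ∑ j : Fin t, ∑ x, μ₁ x * ∑ z, P (hs j) x z * D (x, z)
        = ∑ x, ∑ z, μ₁ x * (((1 / (t:ℝ)) * ∑ j, P (hs j) x z) * D (x, z)) := by
      simp_rw [Finset.mul_sum, Finset.sum_mul]
      rw [Finset.sum_comm]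
      refine Finset.sum_congr rfl fun x _ => ?_
      rw [Finset.sum_comm]
      refine Finset.sum_congr rfl fun z _ => ?_
      rw [Finset.mul_sum]
      refine Finset.sum_congr rfl fun j _ => ?_
      ring
    rw [h2]
    simp_rw [hΔ_def, Finset.mul_sum, sub_mul, mul_sub, Finset.sum_sub_distrib]
  rw [key]
  calc |∑ x, μ₁ x * ∑ z, Δ x z * D (x, z)|
      ≤ ∑ x, |μ₁ x * ∑ z, Δ x z * D (x, z)| := Finset.abs_sum_le_sum_abs _ _
  _ ≤ ∑ x, μ₁ x * ∑ z, |Δ x z| := by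
      refine Finset.sum_le_sum fun x _ => ?_
      rw [abs_mul, abs_of_nonneg (hμ₁_nonneg x)]
      apply mul_le_mul_of_nonneg_left _ (hμ₁_nonneg x)
      calc |∑ z, Δ x z * D (x, z)| ≤ ∑ z, |Δ x z * D (x, z)| := Finset.abs_sum_le_sum_abs _ _
      _ ≤ ∑ z, |Δ x z| := by
          refine Finset.sum_le_sum fun z _ => ?_
          rw [abs_mul]
          calc |Δ x z| * |D (x, z)| ≤ |Δ x z| * 1 :=
            mul_le_mul_of_nonneg_left (hD x z) (abs_nonneg _)
          _ = |Δ x z| := mul_one _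
  _ = err hs := by rw [herr_def]
  _ ≤ ε := herr_le
end

section
/- Let q, ε_F, k, ℓ be real numbers with q > 0, ε_F > 0, and set ε' = 4·q·2^{ℓ/2}·ε_F^{1/2} and s_F = 2^k·ε_F. If s_F ≥ 2^{3ℓ} / ε'², then ε' ≥ 2·q^{1/2}·2^{ℓ}·2^{−k/4}. -/
open Real in
theorem stmt_10 (q εF k ℓ ε' sF : ℝ) (hq : 0 < q) (hεF : 0 < εF)
    (hε' : ε' = 4 * q * (2 : ℝ) ^ (ℓ / 2) * εF ^ ((1 : ℝ) / 2))
    (hsF : sF = (2 : ℝ) ^ k * εF)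
    (hmain : sF ≥ (2 : ℝ) ^ (3 * ℓ) / ε' ^ 2) :
    ε' ≥ 2 * q ^ ((1 : ℝ) / 2) * (2 : ℝ) ^ ℓ * (2 : ℝ) ^ (-k / 4) := by
  set A : ℝ := (2 : ℝ) ^ (ℓ / 2) with hA
  set B : ℝ := (2 : ℝ) ^ (k / 4) with hB
  set E : ℝ := εF ^ ((1 : ℝ) / 2) with hE
  set Q : ℝ := q ^ ((1 : ℝ) / 2) with hQ
  have h2 : (0:ℝ) ≤ 2 := by norm_num
  have hApos : 0 < A := Real.rpow_pos_of_pos two_pos _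
  have hBpos : 0 < B := Real.rpow_pos_of_pos two_pos _
  have hEpos : 0 < E := Real.rpow_pos_of_pos hεF _
  have hQpos : 0 < Q := Real.rpow_pos_of_pos hq _
  have hAl : (2:ℝ) ^ ℓ = A ^ 2 := by
    rw [hA, ← Real.rpow_natCast ((2:ℝ) ^ (ℓ/2)) 2, ← Real.rpow_mul h2]
    norm_num
  have hA6 : (2:ℝ) ^ (3 * ℓ) = A ^ 6 := by
    rw [hA, ← Real.rpow_natCast ((2:ℝ) ^ (ℓ/2)) 6, ← Real.rpow_mul h2]
    congr 1; push_cast; ring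
  have hBk : (2:ℝ) ^ k = B ^ 4 := by
    rw [hB, ← Real.rpow_natCast ((2:ℝ) ^ (k/4)) 4, ← Real.rpow_mul h2]
    congr 1; push_cast; ring
  have hBneg : (2:ℝ) ^ (-k / 4) = B⁻¹ := by
    rw [hB, ← Real.rpow_neg h2]
    congr 1; ring
  have hE2 : εF = E ^ 2 := by
    rw [hE, ← Real.rpow_natCast (εF ^ ((1:ℝ)/2)) 2, ← Real.rpow_mul hεF.le]
    norm_num
  have hQ2 : q = Q ^ 2 := by
    rw [hQ, ← Real.rpow_natCast (q ^ ((1:ℝ)/2)) 2, ← Real.rpow_mul hq.le]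
    norm_num
  have hε'pos : 0 < ε' := by
    rw [hε']; positivity
  rw [hε'] at hmain ⊢
  rw [hsF, hBk, hE2, hA6, hQ2] at hmain
  rw [hAl, hBneg, hQ2]
  rw [ge_iff_le, div_le_iff₀ (by positivity)] at hmain
  -- hmain : A^6 ≤ B^4 * E^2 * (4 * Q^2 * A * E)^2
  have key : A ^ 4 ≤ (2 * Q * B * E) ^ 4 := by
    nlinarith [sq_nonneg A, sq_nonneg (Q*B*E), mul_pos hApos hApos, sq_nonneg (A*A), hApos.le]
  have key2 : A ≤ 2 * Q * B * E :=
    le_of_pow_le_pow_left₀ (by norm_num) (by positivity) key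
  rw [ge_iff_le]
  have : 2 * Q * A ^ 2 * B⁻¹ ≤ 4 * Q ^ 2 * A * E ↔
      2 * Q * A ^ 2 ≤ 4 * Q ^ 2 * A * E * B := by
    rw [← div_le_iff₀ hBpos, div_eq_mul_inv]
  rw [this]
  nlinarith [mul_pos (mul_pos hQpos hQpos) hApos, key2, hApos.le, hQpos.le]
end

section
/- Let q, ε_F, k, ℓ be real numbers with q > 0, ε_F > 0, and set ε' = 4·q·2^{ℓ/2}·ε_F^{1/2} and s_F = 2^k·ε_F. If s_F ≥ 2^{ℓ} / ε'⁴, then ε' ≥ 2^{2/3}·q^{1/3}·2^{ℓ/3}·2^{−k/6}. -/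
open Real in
theorem stmt_11 (q εF k ℓ ε' sF : ℝ) (hq : 0 < q) (hεF : 0 < εF)
    (hε' : ε' = 4 * q * (2 : ℝ) ^ (ℓ / 2) * εF ^ ((1 : ℝ) / 2))
    (hsF : sF = (2 : ℝ) ^ k * εF)
    (hmain : sF ≥ (2 : ℝ) ^ ℓ / ε' ^ 4) :
    ε' ≥ (2 : ℝ) ^ ((2 : ℝ) / 3) * q ^ ((1 : ℝ) / 3) * (2 : ℝ) ^ (ℓ / 3) * (2 : ℝ) ^ (-k / 6) := by
  have two0 : (0:ℝ) ≤ 2 := by norm_num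
  have hpl : (0:ℝ) < (2:ℝ) ^ ℓ := Real.rpow_pos_of_pos (by norm_num) ℓ
  have hpk : (0:ℝ) < (2:ℝ) ^ k := Real.rpow_pos_of_pos (by norm_num) k
  have hpnk : (0:ℝ) < (2:ℝ) ^ (-k) := Real.rpow_pos_of_pos (by norm_num) (-k)
  have hε'pos : 0 < ε' := by
    rw [hε']
    positivity
  have hsq2 : ((2:ℝ) ^ (ℓ/2)) ^ (2:ℕ) = (2:ℝ) ^ ℓ := by
    rw [← Real.rpow_natCast ((2:ℝ) ^ (ℓ/2)) 2, ← Real.rpow_mul two0]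
    norm_num
  have hsqε : (εF ^ ((1:ℝ)/2)) ^ (2:ℕ) = εF := by
    rw [← Real.rpow_natCast _ 2, ← Real.rpow_mul hεF.le]
    norm_num
  have e2 : ε' ^ 2 = 16 * q ^ 2 * (2:ℝ) ^ ℓ * εF := by
    rw [hε']
    calc (4 * q * (2:ℝ) ^ (ℓ/2) * εF ^ ((1:ℝ)/2)) ^ 2
        = 16 * q ^ 2 * ((2:ℝ) ^ (ℓ/2)) ^ (2:ℕ) * (εF ^ ((1:ℝ)/2)) ^ (2:ℕ) := by ring
      _ = 16 * q ^ 2 * (2:ℝ) ^ ℓ * εF := by rw [hsq2, hsqε]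
  have e4 : ε' ^ 4 = 256 * q ^ 4 * ((2:ℝ) ^ ℓ) ^ 2 * εF ^ 2 := by
    have : ε' ^ 4 = (ε' ^ 2) ^ 2 := by ring
    rw [this, e2]; ring
  have e6 : ε' ^ 6 = 4096 * q ^ 6 * ((2:ℝ) ^ ℓ) ^ 3 * εF ^ 3 := by
    have : ε' ^ 6 = (ε' ^ 2) ^ 3 := by ring
    rw [this, e2]; ring
  have hpow6 : ∀ x : ℝ, 0 ≤ x → ∀ a : ℝ, (x ^ a) ^ (6:ℕ) = x ^ (a * 6) := by
    intro x hx a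
    rw [← Real.rpow_natCast (x ^ a) 6, ← Real.rpow_mul hx]
    norm_num
  set A := (2 : ℝ) ^ ((2 : ℝ) / 3) * q ^ ((1 : ℝ) / 3) * (2 : ℝ) ^ (ℓ / 3) * (2 : ℝ) ^ (-k / 6) with hA
  have hApos : 0 < A := by positivity
  have a6 : A ^ 6 = 16 * q ^ 2 * ((2:ℝ) ^ ℓ) ^ 2 * (2:ℝ) ^ (-k) := by
    have h1 : A ^ 6 = ((2:ℝ) ^ ((2:ℝ)/3)) ^ (6:ℕ) * (q ^ ((1:ℝ)/3)) ^ (6:ℕ) *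
        ((2:ℝ) ^ (ℓ/3)) ^ (6:ℕ) * ((2:ℝ) ^ (-k/6)) ^ (6:ℕ) := by rw [hA]; ring
    rw [h1, hpow6 2 two0, hpow6 q hq.le, hpow6 2 two0, hpow6 2 two0]
    have h2 : (2:ℝ) ^ ((2:ℝ)/3 * 6) = 16 := by
      norm_num
    have h3 : q ^ ((1:ℝ)/3 * 6) = q ^ (2:ℕ) := by
      rw [← Real.rpow_natCast q 2]
      norm_num
    have h4 : (2:ℝ) ^ (ℓ/3 * 6) = ((2:ℝ) ^ ℓ) ^ (2:ℕ) := by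
      rw [← Real.rpow_natCast ((2:ℝ)^ℓ) 2, ← Real.rpow_mul two0]
      ring_nf
    have h5 : (2:ℝ) ^ (-k/6 * 6) = (2:ℝ) ^ (-k) := by ring_nf
    rw [h2, h3, h4, h5]
  have hkk : (2:ℝ) ^ k * (2:ℝ) ^ (-k) = 1 := by
    rw [← Real.rpow_add (by norm_num)]
    simp
  -- main inequality
  have key : (2:ℝ) ^ ℓ ≤ (2:ℝ) ^ k * εF * ε' ^ 4 := by
    rw [hsF] at hmain
    have h4pos : 0 < ε' ^ 4 := by positivity
    calc (2:ℝ) ^ ℓ = (2:ℝ) ^ ℓ / ε' ^ 4 * ε' ^ 4 := by field_simp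
      _ ≤ (2:ℝ) ^ k * εF * ε' ^ 4 := by
          exact mul_le_mul_of_nonneg_right hmain h4pos.le
  have key2 : A ^ 6 ≤ ε' ^ 6 := by
    rw [a6, e6]
    rw [e4] at key
    have step := mul_le_mul_of_nonneg_right key
      (mul_pos (mul_pos (mul_pos (by norm_num : (0:ℝ) < 16) (pow_pos hq 2)) hpl) hpnk).le
    calc 16 * q ^ 2 * ((2:ℝ) ^ ℓ) ^ 2 * (2:ℝ) ^ (-k)
        = (2:ℝ) ^ ℓ * (16 * q ^ 2 * (2:ℝ) ^ ℓ * (2:ℝ) ^ (-k)) := by ring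
      _ ≤ (2:ℝ) ^ k * εF * (256 * q ^ 4 * ((2:ℝ) ^ ℓ) ^ 2 * εF ^ 2) *
          (16 * q ^ 2 * (2:ℝ) ^ ℓ * (2:ℝ) ^ (-k)) := step
      _ = 4096 * q ^ 6 * ((2:ℝ) ^ ℓ) ^ 3 * εF ^ 3 * ((2:ℝ) ^ k * (2:ℝ) ^ (-k)) := by ring
      _ = 4096 * q ^ 6 * ((2:ℝ) ^ ℓ) ^ 3 * εF ^ 3 := by rw [hkk, mul_one]
  exact le_of_pow_le_pow_left₀ (by norm_num) hε'pos.le key2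
end

section
/- Let u, w be real numbers with u > 2, w > 0 and w · 2^w = u. Then (log₂ u)/2 < w < log₂ u. -/
lemma lt_two_rpow (w : ℝ) (hw : 0 < w) : w < (2:ℝ) ^ w := by
  rcases le_or_gt 1 w with h1 | h1
  · have := one_add_mul_self_le_rpow_one_add (by norm_num : (-1:ℝ) ≤ 1) h1
    norm_num at this
    linarith
  · calc w < 1 := h1
      _ < (2:ℝ) ^ w := by
        rw [show (1:ℝ) = (2:ℝ) ^ (0:ℝ) by simp]
        exact Real.rpow_lt_rpow_left_iff (by norm_num) |>.mpr hw

theorem stmt_14 (u w : ℝ) (hu : 2 < u) (hw : 0 < w) (h : w * (2 : ℝ) ^ w = u) :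
    Real.logb 2 u / 2 < w ∧ w < Real.logb 2 u := by
  have hrp : (0:ℝ) < (2:ℝ) ^ w := Real.rpow_pos_of_pos (by norm_num) w
  have hlogu : Real.logb 2 u = Real.logb 2 w + w := by
    rw [← h, Real.logb_mul (ne_of_gt hw) (ne_of_gt hrp), Real.logb_rpow (by norm_num) (by norm_num)]
  have h1 : 1 < w := by
    by_contra hc
    push_neg at hc
    have : (2:ℝ)^w ≤ 2^(1:ℝ) :=
      Real.rpow_le_rpow_of_exponent_le (by norm_num) hc
    norm_num at this
    nlinarith [mul_le_mul hc this (le_of_lt hrp) zero_le_one]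
  have hlw : Real.logb 2 w < w := by
    have := lt_two_rpow w hw
    calc Real.logb 2 w < Real.logb 2 ((2:ℝ)^w) :=
          Real.logb_lt_logb (by norm_num) hw this
      _ = w := Real.logb_rpow (by norm_num) (by norm_num)
  have hlwpos : 0 < Real.logb 2 w := Real.logb_pos (by norm_num) h1
  constructor
  · rw [hlogu]; linarith
  · rw [hlogu]; linarith
end
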